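/- arXiv:1007.1709 — 6 statements merged into one kernel-verified Lean document; each statement's English description precedes it below -/
import Mathlib

section
/- Let I be a comparable set of nodes with respect to their time-stamp vectors. If p >_I q and q >_I w for p, q, w ∈ I, then p >_I w (the relation >_I is transitive on comparable sets). -/
/-- `time_p >_I time_q` : for every `i ∈ I`, `time_p[i] ≥_i time_q[i]`,
`time_p[q] =_q time_q[q]`, and `time_p[p] >_p time_q[p]`. -/
def gtI {Node : Type*} {Label : Node → Type*} [∀ i, LinearOrder (Label i)]
    (time : Node → ∀ i, Label i) (I : Finset Node) (p q : Node) : Prop :=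
  (∀ i ∈ I, time q i ≤ time p i) ∧ time p q = time q q ∧ time q p < time p p

/-- A set `I` of nodes is comparable if any two distinct elements are related
by `>_I` in one direction. -/
def ComparableSet {Node : Type*} {Label : Node → Type*} [∀ i, LinearOrder (Label i)]
    (time : Node → ∀ i, Label i) (I : Finset Node) : Prop :=
  ∀ p ∈ I, ∀ q ∈ I, p ≠ q → gtI time I p q ∨ gtI time I q p

theorem stmt3 {Node : Type*} {Label : Node → Type*} [∀ i, LinearOrder (Label i)]
    (time : Node → ∀ i, Label i) (I : Finset Node)
    (hcomp : ComparableSet time I)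
    (p q w : Node) (hp : p ∈ I) (hq : q ∈ I) (hw : w ∈ I)
    (hpq : gtI time I p q) (hqw : gtI time I q w) :
    gtI time I p w := by
  obtain ⟨h1, h2, h3⟩ := hpq
  obtain ⟨g1, g2, g3⟩ := hqw
  have hpw : p ≠ w := by
    rintro rfl
    exact absurd (h2 ▸ g3) (lt_irrefl _)
  rcases hcomp p hp w hw hpw with h | h
  · exact h
  · obtain ⟨k1, k2, k3⟩ := h
    exact absurd (lt_of_lt_of_le k3 (g2 ▸ h1 w hw)) (lt_irrefl _)
end

section
/- If I and I' are comparable sets of nodes, then I ∩ I' is a comparable set; moreover, for p, q ∈ I ∩ I', p <_{I∩I'} q if and only if p <_I q. -/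
theorem stmt4 {Node : Type*} [DecidableEq Node] {Label : Node → Type*}
    [∀ i, LinearOrder (Label i)]
    (time : Node → ∀ i, Label i) (I I' : Finset Node)
    (hI : ComparableSet time I) (hI' : ComparableSet time I') :
    ComparableSet time (I ∩ I') ∧
      ∀ p ∈ I ∩ I', ∀ q ∈ I ∩ I',
        (gtI time (I ∩ I') q p ↔ gtI time I q p) := by
  have key : ∀ p ∈ I ∩ I', ∀ q ∈ I ∩ I',
      (gtI time (I ∩ I') q p ↔ gtI time I q p) := by
    intro p hp q hq
    have hpI := (Finset.mem_inter.mp hp).1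
    have hqI := (Finset.mem_inter.mp hq).1
    constructor
    · rintro ⟨h1, h2, h3⟩
      have hne : q ≠ p := by rintro rfl; exact lt_irrefl _ h3
      rcases hI q hqI p hpI hne with h | ⟨_, h2', _⟩
      · exact h
      · exact absurd h2' (ne_of_lt h3)
    · rintro ⟨h1, h2, h3⟩
      exact ⟨fun i hi => h1 i (Finset.mem_inter.mp hi).1, h2, h3⟩
  refine ⟨?_, key⟩
  intro p hp q hq hne
  rcases hI p (Finset.mem_inter.mp hp).1 q (Finset.mem_inter.mp hq).1 hne with h | h
  · exact Or.inl ((key q hq p hp).mpr h)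
  · exact Or.inr ((key p hp q hq).mpr h)
end

section
/- Let I, I' be comparable sets of nodes and ℓ' = max(|I|, |I'|) - |I ∩ I'|. If p ∈ I ∩ I', then I'_#(p) - ℓ' ≤ I_#(p) ≤ I'_#(p) + ℓ'. -/
/-- Rank of `p` in `I`. -/
noncomputable def rankIn {Node : Type*} {Label : Node → Type*} [∀ i, LinearOrder (Label i)]
    (time : Node → ∀ i, Label i) (I : Finset Node) (p : Node) : ℕ :=
  {q | q ∈ I ∧ gtI time I q p}.ncard + 1

/-!
Comparability of `J` together with the asymmetry of `gtI` forces every `>_I`-relation between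
two members of `J` to hold in `J` as well. Hence the nodes above `p` in `I` are those above `p`
in `J` plus at most the `|I \ J| ≤ ℓ'` nodes of `I` outside `J`, and symmetrically.
-/

section Rank

variable {Node : Type*} {Label : Node → Type*} [∀ i, LinearOrder (Label i)]
  {time : Node → ∀ i, Label i}

theorem gtI_asymm {I J : Finset Node} {p q : Node} (h : gtI time I p q) : ¬gtI time J q p :=
  fun h' => h'.2.2.ne h.2.1

theorem ComparableSet.gtI_of_gtI {I J : Finset Node} (hJ : ComparableSet time J) {p q : Node}
    (hp : p ∈ J) (hq : q ∈ J) (h : gtI time I p q) : gtI time J p q := by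
  have hpq : p ≠ q := by
    rintro rfl
    exact gtI_asymm h h
  exact (hJ p hp q hq hpq).resolve_right (gtI_asymm h)

theorem rankIn_le_rankIn_add_card_sdiff [DecidableEq Node] {I J : Finset Node}
    (hJ : ComparableSet time J) {p : Node} (hp : p ∈ J) :
    rankIn time I p ≤ rankIn time J p + (I \ J).card := by
  have hsub : {q | q ∈ I ∧ gtI time I q p} ⊆ {q | q ∈ J ∧ gtI time J q p} ∪ ↑(I \ J) := by
    rintro q ⟨hqI, hqp⟩
    by_cases hqJ : q ∈ J
    · exact Or.inl ⟨hqJ, hJ.gtI_of_gtI hqJ hp hqp⟩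
    · exact Or.inr (Finset.mem_sdiff.2 ⟨hqI, hqJ⟩)
  have hfin : ({q | q ∈ J ∧ gtI time J q p} ∪ ↑(I \ J)).Finite :=
    (J.finite_toSet.subset fun _ hq => hq.1).union (I \ J).finite_toSet
  unfold rankIn
  calc {q | q ∈ I ∧ gtI time I q p}.ncard + 1
      ≤ ({q | q ∈ J ∧ gtI time J q p} ∪ ↑(I \ J)).ncard + 1 :=
        Nat.add_le_add_right (Set.ncard_le_ncard hsub hfin) 1
    _ ≤ {q | q ∈ J ∧ gtI time J q p}.ncard + 1 + (I \ J).card := by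
        have := Set.ncard_union_le {q | q ∈ J ∧ gtI time J q p} ↑(I \ J)
        rw [Set.ncard_coe_finset] at this
        omega

end Rank

theorem stmt6 {Node : Type*} [DecidableEq Node] {Label : Node → Type*}
    [∀ i, LinearOrder (Label i)]
    (time : Node → ∀ i, Label i) (I I' : Finset Node)
    (hI : ComparableSet time I) (hI' : ComparableSet time I')
    (p : Node) (hp : p ∈ I ∩ I') :
    rankIn time I' p - (max I.card I'.card - (I ∩ I').card) ≤ rankIn time I p ∧
      rankIn time I p ≤ rankIn time I' p + (max I.card I'.card - (I ∩ I').card) := by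
  obtain ⟨hpI, hpI'⟩ := Finset.mem_inter.1 hp
  have hle := rankIn_le_rankIn_add_card_sdiff (I := I) hI' hpI'
  have hge := rankIn_le_rankIn_add_card_sdiff (I := I') hI hpI
  have hsdiff : (I \ I').card = I.card - (I ∩ I').card := by
    rw [Finset.card_sdiff, Finset.inter_comm]
  have hsdiff' : (I' \ I).card = I'.card - (I ∩ I').card := Finset.card_sdiff
  have hmax := le_max_left I.card I'.card
  have hmax' := le_max_right I.card I'.card
  omega
end

section
/- If configuration values satisfy: at most f of n nodes are faulty, and for values v ≠ v' in Z_k with k > 4, both |H(v,1)| ≥ n-2f and |H(v',1)| ≥ n-2f where H counts non-faulty nodes (of which there are at least n-f) whose value lies in {v, v+1 mod k} resp. {v', v'+1 mod k}, and n > 6f, then v ⪯_1 v' or v' ⪯_1 v. -/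
theorem stmt12 {α : Type*} [DecidableEq α] (n f k : ℕ) (hk : 4 < k) (hn : 6 * f < n)
    (P F : Finset α) (hP : P.card = n) (hFP : F ⊆ P) (hf : F.card ≤ f)
    (val : α → ℕ) (v v' : ℕ) (hv : v < k) (hv' : v' < k) (hne : v ≠ v')
    (h1 : n - 2 * f ≤
      ((P \ F).filter (fun q => val q = v ∨ val q = (v + 1) % k)).card)
    (h2 : n - 2 * f ≤
      ((P \ F).filter (fun q => val q = v' ∨ val q = (v' + 1) % k)).card) :
    (∃ j ≤ 1, (v + j) % k = v') ∨ (∃ j ≤ 1, (v' + j) % k = v) := by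
  classical
  set A := (P \ F).filter (fun q => val q = v ∨ val q = (v + 1) % k) with hA
  set B := (P \ F).filter (fun q => val q = v' ∨ val q = (v' + 1) % k) with hB
  have hPF : (P \ F).card ≤ n := by
    calc (P \ F).card ≤ P.card := Finset.card_le_card Finset.sdiff_subset
    _ = n := hP
  have hU : (A ∪ B).card ≤ n := by
    refine le_trans (Finset.card_le_card ?_) hPF
    intro x hx
    rcases Finset.mem_union.1 hx with h | h <;> exact (Finset.mem_filter.1 h).1
  have hint : 0 < (A ∩ B).card := by
    have := Finset.card_union_add_card_inter A B
    omega
  obtain ⟨q, hq⟩ := Finset.card_pos.1 hint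
  have hqA := (Finset.mem_filter.1 (Finset.mem_inter.1 hq).1).2
  have hqB := (Finset.mem_filter.1 (Finset.mem_inter.1 hq).2).2
  have e1 : (v + 1) % k = v + 1 ∨ ((v + 1) % k = 0 ∧ v + 1 = k) := by
    rcases Nat.lt_or_ge (v + 1) k with hlt | hge
    · exact Or.inl (Nat.mod_eq_of_lt hlt)
    · have : v + 1 = k := by omega
      exact Or.inr ⟨by rw [this, Nat.mod_self], this⟩
  have e2 : (v' + 1) % k = v' + 1 ∨ ((v' + 1) % k = 0 ∧ v' + 1 = k) := by
    rcases Nat.lt_or_ge (v' + 1) k with hlt | hge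
    · exact Or.inl (Nat.mod_eq_of_lt hlt)
    · have : v' + 1 = k := by omega
      exact Or.inr ⟨by rw [this, Nat.mod_self], this⟩
  have hv0 : (v + 0) % k = v := by simp [Nat.mod_eq_of_lt hv]
  have hv'0 : (v' + 0) % k = v' := by simp [Nat.mod_eq_of_lt hv']
  rcases hqA with h | h <;> rcases hqB with h' | h'
  · exact absurd (h.symm.trans h') hne
  · right; exact ⟨1, le_refl 1, h'.symm.trans h⟩
  · left; exact ⟨1, le_refl 1, h.symm.trans h'⟩
  · have : v = v' := by
      have := h.symm.trans h'
      rcases e1 with ⟨a⟩ | ⟨a, b⟩ <;> rcases e2 with ⟨c⟩ | ⟨c, d⟩ <;> omega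
    exact absurd this hne
end

section
/- Let n > 6f, k ≥ 3, and consider n register values in Z_k. Define count(v,1) = #v + #(v+1 mod k) and pass(1, n-2f) = {v : count(v,1) ≥ n-2f}. Then pass(1, n-2f) contains at most 2 values, and if it contains exactly 2 values they are consecutive mod k; consequently there exists 'low' ∉ pass(1,n-2f) with (low+1 mod k) ∈ pass(1,n-2f) whenever pass(1,n-2f) ≠ ∅. -/
private lemma succ_mod_inj' {k a b : ℕ} (ha : a < k) (hb : b < k)
    (h : (a + 1) % k = (b + 1) % k) : a = b := by
  rcases Nat.lt_or_ge (a + 1) k with h1 | h1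
  · rcases Nat.lt_or_ge (b + 1) k with h2 | h2
    · rw [Nat.mod_eq_of_lt h1, Nat.mod_eq_of_lt h2] at h; omega
    · have hb1 : b + 1 = k := by omega
      rw [Nat.mod_eq_of_lt h1, hb1, Nat.mod_self] at h; omega
  · have ha1 : a + 1 = k := by omega
    rcases Nat.lt_or_ge (b + 1) k with h2 | h2
    · rw [ha1, Nat.mod_self, Nat.mod_eq_of_lt h2] at h; omega
    · omega

private lemma succ_mod_ne_self' {k a : ℕ} (hk : 2 ≤ k) (ha : a < k) :
    (a + 1) % k ≠ a := by
  rcases eq_or_lt_of_le (Nat.succ_le_of_lt ha) with h1 | h1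
  · rw [← h1, Nat.mod_self]; omega
  · rw [Nat.mod_eq_of_lt h1]; omega

private lemma disj_fibers {n : ℕ} (r : Fin n → ℕ) {a b : ℕ} (hab : a ≠ b) :
    Disjoint (Finset.univ.filter (fun i => r i = a))
      (Finset.univ.filter (fun i => r i = b)) := by
  rw [Finset.disjoint_left]
  intro i hi hj
  simp only [Finset.mem_filter] at hi hj
  exact hab (hi.2 ▸ hj.2)

theorem stmt17 (n f k : ℕ) (hn : 6 * f < n) (hk : 3 ≤ k)
    (r : Fin n → ℕ) (hr : ∀ i, r i < k) :
    let cnt : ℕ → ℕ := fun v =>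
      (Finset.univ.filter (fun i => r i = v)).card +
        (Finset.univ.filter (fun i => r i = (v + 1) % k)).card
    let pass : Finset ℕ := (Finset.range k).filter (fun v => n - 2 * f ≤ cnt v)
    pass.card ≤ 2 ∧
      (pass.card = 2 → ∃ v, pass = {v, (v + 1) % k}) ∧
      (pass.Nonempty → ∃ low < k, low ∉ pass ∧ (low + 1) % k ∈ pass) := by
  intro cnt pass
  have hk0 : 0 < k := by omega
  set A : ℕ → ℕ := fun v => (Finset.univ.filter (fun i => r i = v)).card with hA
  -- total of fibers is n
  have hsumA : ∑ v ∈ Finset.range k, A v = n := by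
    have := Finset.card_eq_sum_card_fiberwise
      (f := r) (s := Finset.univ) (t := Finset.range k)
      (fun i _ => Finset.mem_range.2 (hr i))
    simpa [hA] using this.symm
  -- shifted sum equals the plain sum
  have hshift : ∑ v ∈ Finset.range k, A ((v + 1) % k) = ∑ v ∈ Finset.range k, A v := by
    obtain ⟨m, rfl⟩ : ∃ m, k = m + 1 := ⟨k - 1, by omega⟩
    rw [Finset.sum_range_succ, Finset.sum_range_succ']
    congr 1
    · apply Finset.sum_congr rfl
      intro v hv
      rw [Nat.mod_eq_of_lt (by simpa using Finset.mem_range.1 hv)]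
    · rw [Nat.mod_self]
  have hcnt2n : ∑ v ∈ Finset.range k, cnt v = 2 * n := by
    have : ∑ v ∈ Finset.range k, cnt v
        = ∑ v ∈ Finset.range k, A v + ∑ v ∈ Finset.range k, A ((v + 1) % k) := by
      rw [← Finset.sum_add_distrib]
    rw [this, hshift, hsumA]; ring
  have hpass_sub : pass ⊆ Finset.range k := Finset.filter_subset _ _
  have hsum_le : ∑ v ∈ pass, cnt v ≤ 2 * n := by
    rw [← hcnt2n]
    exact Finset.sum_le_sum_of_subset hpass_sub
  have hcard_mul : pass.card * (n - 2 * f) ≤ ∑ v ∈ pass, cnt v := by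
    have := Finset.card_nsmul_le_sum pass cnt (n - 2 * f)
      (fun v hv => (Finset.mem_filter.1 hv).2)
    simpa using this
  -- Part 1
  have hpc : pass.card ≤ 2 := by
    by_contra hc
    have h3 : 3 ≤ pass.card := by omega
    have : 3 * (n - 2 * f) ≤ pass.card * (n - 2 * f) :=
      Nat.mul_le_mul_right _ h3
    omega
  refine ⟨hpc, ?_, ?_⟩
  · -- Part 2
    intro h2
    obtain ⟨a, b, hab, hpab⟩ := Finset.card_eq_two.1 h2
    have hain : a ∈ pass := by rw [hpab]; simp
    have hbin : b ∈ pass := by rw [hpab]; simp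
    have ha := Finset.mem_filter.1 hain
    have hb := Finset.mem_filter.1 hbin
    have hak : a < k := Finset.mem_range.1 ha.1
    have hbk : b < k := Finset.mem_range.1 hb.1
    have hcons : b = (a + 1) % k ∨ a = (b + 1) % k := by
      by_contra hcon
      push_neg at hcon
      obtain ⟨hc1, hc2⟩ := hcon
      -- four pairwise disjoint fibers
      have d1 : Disjoint (Finset.univ.filter (fun i => r i = a))
          (Finset.univ.filter (fun i => r i = (a + 1) % k)) :=
        disj_fibers r (fun h => succ_mod_ne_self' (by omega) hak h.symm)
      have d2 : Disjoint (Finset.univ.filter (fun i => r i = b))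
          (Finset.univ.filter (fun i => r i = (b + 1) % k)) :=
        disj_fibers r (fun h => succ_mod_ne_self' (by omega) hbk h.symm)
      have d3 : Disjoint
          ((Finset.univ.filter (fun i => r i = a)) ∪
            (Finset.univ.filter (fun i => r i = (a + 1) % k)))
          ((Finset.univ.filter (fun i => r i = b)) ∪
            (Finset.univ.filter (fun i => r i = (b + 1) % k))) := by
        rw [Finset.disjoint_union_left, Finset.disjoint_union_right,
          Finset.disjoint_union_right]
        exact ⟨⟨disj_fibers r hab, disj_fibers r hc2⟩,
          ⟨disj_fibers r (fun h => hc1 h.symm),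
            disj_fibers r (fun h => hab (succ_mod_inj' hak hbk h))⟩⟩
      have hcard : cnt a + cnt b ≤ n := by
        have e1 := Finset.card_union_of_disjoint d1
        have e2 := Finset.card_union_of_disjoint d2
        have e3 := Finset.card_union_of_disjoint d3
        have hle : (((Finset.univ.filter (fun i => r i = a)) ∪
            (Finset.univ.filter (fun i => r i = (a + 1) % k))) ∪
            ((Finset.univ.filter (fun i => r i = b)) ∪
            (Finset.univ.filter (fun i => r i = (b + 1) % k)))).card ≤ n := by
          have := Finset.card_le_card
            (Finset.subset_univ ((((Finset.univ.filter (fun i => r i = a)) ∪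
            (Finset.univ.filter (fun i => r i = (a + 1) % k))) ∪
            ((Finset.univ.filter (fun i => r i = b)) ∪
            (Finset.univ.filter (fun i => r i = (b + 1) % k))))))
          simpa using this
        rw [e3, e1, e2] at hle
        simpa [cnt] using hle
      have hca : n - 2 * f ≤ cnt a := ha.2
      have hcb : n - 2 * f ≤ cnt b := hb.2
      omega
    rcases hcons with h | h
    · exact ⟨a, by rw [hpab, h]⟩
    · exact ⟨b, by rw [hpab, ← h, Finset.pair_comm]⟩
  · -- Part 3
    intro hne
    obtain ⟨p, hp⟩ := hne
    have hpk : p < k := Finset.mem_range.1 (Finset.mem_filter.1 hp).1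
    -- find w < k not in pass
    obtain ⟨w, hwk, hw⟩ : ∃ w, w < k ∧ w ∉ pass := by
      by_contra hcon
      push_neg at hcon
      have hsub : Finset.range k ⊆ pass := by
        intro x hx
        exact hcon x (Finset.mem_range.1 hx)
      have := Finset.card_le_card hsub
      rw [Finset.card_range] at this
      omega
    have hex : ∃ j, (w + j) % k ∈ pass := by
      refine ⟨(p + k - w) % k, ?_⟩
      have h1 : (w + (p + k - w) % k) % k = (w + (p + k - w)) % k := by
        conv_lhs => rw [Nat.add_mod, Nat.mod_mod_of_dvd _ dvd_rfl]
        rw [← Nat.add_mod]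
      have h2 : w + (p + k - w) = p + k := by omega
      rw [h1, h2, Nat.add_mod_right, Nat.mod_eq_of_lt hpk]
      exact hp
    classical
    set j := Nat.find hex with hj
    have hspec : (w + j) % k ∈ pass := Nat.find_spec hex
    have hj0 : j ≠ 0 := by
      intro h0
      rw [h0, Nat.add_zero, Nat.mod_eq_of_lt hwk] at hspec
      exact hw hspec
    have hmin : (w + (j - 1)) % k ∉ pass := Nat.find_min hex (by omega)
    refine ⟨(w + (j - 1)) % k, Nat.mod_lt _ hk0, hmin, ?_⟩
    have h1 : ((w + (j - 1)) % k + 1) % k = (w + (j - 1) + 1) % k := by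
      conv_rhs => rw [Nat.add_mod]
      rw [Nat.mod_eq_of_lt (show 1 < k by omega)]
    have h2 : w + (j - 1) + 1 = w + j := by omega
    rw [h1, h2]
    exact hspec
end

section
/- Suppose q ∈ U (nodes that never updated) and p ∈ Y (nodes that updated), both in a comparable set I where updates place a node's own label strictly above its previous label in its own total order, and q's own label is unchanged since the start. Then q <_I p; consequently the rank of p in I is strictly smaller than the rank of q: I_#(p) < I_#(q). -/
theorem stmt19 {Node : Type*} {Label : Node → Type*} [∀ i, LinearOrder (Label i)]
    (time : Node → ∀ i, Label i) (I : Finset Node)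
    (hcomp : ComparableSet time I)
    (p q : Node) (hp : p ∈ I) (hq : q ∈ I) (hne : p ≠ q)
    -- q's own label is unchanged since the start, and p read it:
    (hread : time p q = time q q)
    -- p has updated, placing its own label above what q recorded for p:
    (hupd : time q p < time p p) :
    gtI time I p q ∧ rankIn time I p < rankIn time I q := by
  have hgt : gtI time I p q := by
    rcases hcomp p hp q hq hne with h | h
    · exact h
    · exact absurd h.2.1 hupd.ne
  refine ⟨hgt, ?_⟩
  have hsub : {r | r ∈ I ∧ gtI time I r p} ⊂ {r | r ∈ I ∧ gtI time I r q} := by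
    constructor
    · rintro r ⟨hr, hrp⟩
      refine ⟨hr, ?_⟩
      by_cases hrq : r = q
      · subst hrq
        exact absurd hrp.2.2 (by simp [hread])
      rcases hcomp r hr q hq hrq with h | h
      · exact h
      · exfalso
        have h1 : time p p ≤ time r p := hrp.1 p hp
        have h2 : time r p ≤ time q p := h.1 p hp
        exact absurd (h1.trans h2) (not_le.mpr hupd)
    · intro hsub'
      have := hsub' ⟨hp, hgt⟩
      exact absurd this.2.2.2 (lt_irrefl _)
  have hfin : {r | r ∈ I ∧ gtI time I r q}.Finite :=
    I.finite_toSet.subset (fun r hr => hr.1)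
  unfold rankIn
  exact Nat.add_lt_add_right (Set.ncard_lt_ncard hsub hfin) 1
end
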